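/- Assume the covering setup: n, p ≥ 1; real r with 2 ≤ r < ∞ and q = r/(r−1); constants X_b, B_b > 0; X ∈ ℝ^{n×p} with rows x_i satisfying ‖x_i‖_r ≤ X_b and nonzero columns h_1, ..., h_p; scaled columns h̃_j := (n^{1/r} X_b B_b / ‖h_j‖_r) h_j; constraint data c_{jν} ∈ ℝ and δ_ν > 0 (ν = 1..V) with scaled coefficients c̃_{jν} := c_{jν} n^{1/r} X_b B_b / ‖h_j‖_r and Σ_j |c̃_{jν}| > 0 for each ν; coefficient set B := {β ∈ ℝ^p : ‖β‖_q ≤ B_b and Σ_j c_{jν} β_j + δ_ν ≤ 1 for all ν}; X̃ := [h̃_1 ⋯ h̃_p]; and λ := smallest eigenvalue of X̃ᵀX̃, assumed positive. Let 0 < ε < X_b B_b and set K := max{⌈X_b² B_b² / ε²⌉, ⌈n X_b² B_b² /(λ · [min_{ν} δ_ν/(Σ_j |c̃_{jν}|)]²)⌉}. Then for every β ∈ B there exist integers k_1, ..., k_p ∈ ℤ with Σ_j |k_j| ≤ K and Σ_j c̃_{jν} k_j ≤ K for all ν = 1..V, such that ‖Xβ − Σ_{j=1}^p (k_j/K) h̃_j‖₂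 ≤ √n · ε. -/

import Mathlib

/-- The `ℓ_r` norm of a finite real vector, `(∑ i |v i|^r)^(1/r)`. -/
noncomputable def lpNorm {ι : Type*} [Fintype ι] (r : ℝ) (v : ι → ℝ) : ℝ :=
  (∑ i, |v i| ^ r) ^ (1 / r)

/-!
Rescaling the columns of `X` to the common `ℓ₂` size `√n X_b B_b` writes `Xβ = ∑ b_j h̃_j` with
`∑ |b_j| ≤ 1` (Hölder). Maurey's empirical method approximates such a point of the absolute convex
hull of the `h̃_j` by `∑ (k_j / K) h̃_j` with integers `∑ |k_j| ≤ K`, at squared error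
`n X_b² B_b² / K`. Since `X̃ᵀX̃ ≥ λ`, the same bound controls `‖b - k / K‖₂`, hence each
coordinate of `b - k / K`, so for `K` large the linear constraints move by less than their
slack `δ_ν`.
-/

open Finset

section lpNorm

variable {ι : Type*} [Fintype ι] {r : ℝ}

lemma lpNorm_nonneg (r : ℝ) (v : ι → ℝ) : 0 ≤ lpNorm r v :=
  Real.rpow_nonneg (sum_nonneg fun _ _ => Real.rpow_nonneg (abs_nonneg _) r) _

lemma lpNorm_rpow (hr : r ≠ 0) (v : ι → ℝ) : lpNorm r v ^ r = ∑ i, |v i| ^ r := by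
  rw [lpNorm, ← Real.rpow_mul (sum_nonneg fun i _ => Real.rpow_nonneg (abs_nonneg _) r),
    one_div_mul_cancel hr, Real.rpow_one]

lemma lpNorm_pos {v : ι → ℝ} (hv : v ≠ 0) : 0 < lpNorm r v := by
  obtain ⟨i, hi⟩ := Function.ne_iff.1 hv
  refine Real.rpow_pos_of_pos ?_ _
  exact lt_of_lt_of_le (Real.rpow_pos_of_pos (abs_pos.2 hi) r)
    (single_le_sum (f := fun i => |v i| ^ r) (fun i _ => Real.rpow_nonneg (abs_nonneg _) r)
      (mem_univ i))

lemma sum_abs_mul_abs_le_lpNorm_mul_lpNorm {q : ℝ} (hqr : q.HolderConjugate r)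
    (u v : ι → ℝ) : ∑ i, |u i| * |v i| ≤ lpNorm q u * lpNorm r v := by
  simpa only [lpNorm, abs_abs] using
    Real.inner_le_Lp_mul_Lq univ (fun i => |u i|) (fun i => |v i|) hqr

lemma sum_sq_le_card_rpow_mul_lpNorm_sq (hr : 2 ≤ r) (v : ι → ℝ) :
    ∑ i, v i ^ 2 ≤ (Fintype.card ι : ℝ) ^ (1 - 2 / r) * lpNorm r v ^ 2 := by
  have hr0 : r ≠ 0 := by positivity
  have hS : 0 ≤ ∑ i, |v i| ^ r := sum_nonneg fun i _ => Real.rpow_nonneg (abs_nonneg _) r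
  have hsq : ∀ i, (v i ^ 2) ^ (r / 2) = |v i| ^ r := fun i => by
    rw [← sq_abs, ← Real.rpow_two, ← Real.rpow_mul (abs_nonneg _),
      mul_div_cancel₀ r two_ne_zero]
  have hmean := Real.rpow_sum_le_const_mul_sum_rpow univ (fun i => v i ^ 2)
    (p := r / 2) (by linarith)
  simp only [abs_sq, hsq, card_univ] at hmean
  calc ∑ i, v i ^ 2 = ((∑ i, v i ^ 2) ^ (r / 2)) ^ (2 / r) := by
        rw [← Real.rpow_mul (sum_nonneg fun i _ => sq_nonneg _),
          show r / 2 * (2 / r) = 1 by field_simp, Real.rpow_one]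
    _ ≤ ((Fintype.card ι : ℝ) ^ (r / 2 - 1) * ∑ i, |v i| ^ r) ^ (2 / r) := by gcongr
    _ = (Fintype.card ι : ℝ) ^ (1 - 2 / r) * lpNorm r v ^ 2 := by
        rw [Real.mul_rpow (by positivity) hS, ← Real.rpow_mul (by positivity), lpNorm,
          ← Real.rpow_natCast, ← Real.rpow_mul hS]
        congr 2
        · field_simp
        · push_cast; ring

lemma sum_sq_mul_div_lpNorm_le [Nonempty ι] (hr : 2 ≤ r) (D : ℝ) (v : ι → ℝ) :
    ∑ i, ((Fintype.card ι : ℝ) ^ (1 / r) * D / lpNorm r v * v i) ^ 2 ≤ Fintype.card ι * D ^ 2 := by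
  have hcard : (0 : ℝ) < Fintype.card ι := Nat.cast_pos.2 Fintype.card_pos
  rcases (lpNorm_nonneg r v).eq_or_lt with hL | hL
  · simp [← hL]; positivity
  calc ∑ i, ((Fintype.card ι : ℝ) ^ (1 / r) * D / lpNorm r v * v i) ^ 2
      = ((Fintype.card ι : ℝ) ^ (1 / r) * D / lpNorm r v) ^ 2 * ∑ i, v i ^ 2 := by
        simp only [mul_pow, mul_sum]
    _ ≤ ((Fintype.card ι : ℝ) ^ (1 / r) * D / lpNorm r v) ^ 2 *
        ((Fintype.card ι : ℝ) ^ (1 - 2 / r) * lpNorm r v ^ 2) := by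
        gcongr; exact sum_sq_le_card_rpow_mul_lpNorm_sq hr v
    _ = (Fintype.card ι : ℝ) ^ (2 / r + (1 - 2 / r)) * D ^ 2 := by
        have hsq : ((Fintype.card ι : ℝ) ^ (1 / r)) ^ 2 = (Fintype.card ι : ℝ) ^ (2 / r) := by
          rw [← Real.rpow_natCast, ← Real.rpow_mul hcard.le]; ring_nf
        rw [Real.rpow_add hcard, ← hsq]
        field_simp
    _ = Fintype.card ι * D ^ 2 := by rw [add_sub_cancel, Real.rpow_one]

end lpNorm

section Matrix

variable {m n : Type*} [Fintype m] [Fintype n] {r : ℝ}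

lemma sum_lpNorm_col_rpow_le (hr : 0 < r) {X : Matrix m n ℝ} {Xb : ℝ}
    (hX : ∀ i, lpNorm r (X i) ≤ Xb) :
    ∑ j, lpNorm r (fun i => X i j) ^ r ≤ Fintype.card m * Xb ^ r := by
  calc ∑ j, lpNorm r (fun i => X i j) ^ r = ∑ i, lpNorm r (X i) ^ r := by
        simp only [lpNorm_rpow hr.ne']
        exact sum_comm
    _ ≤ ∑ _i : m, Xb ^ r := sum_le_sum fun i _ =>
        Real.rpow_le_rpow (lpNorm_nonneg r _) (hX i) hr.le
    _ = Fintype.card m * Xb ^ r := by rw [sum_const, card_univ, nsmul_eq_mul]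

/-- Hölder, together with: the `ℓ_r` norm of the column norms equals that of the row norms. -/
lemma sum_abs_mul_lpNorm_col_le {q : ℝ} (hqr : q.HolderConjugate r) {X : Matrix m n ℝ} {Xb : ℝ}
    (hXb : 0 ≤ Xb) (hX : ∀ i, lpNorm r (X i) ≤ Xb) (β : n → ℝ) :
    ∑ j, |β j| * lpNorm r (fun i => X i j) ≤
      lpNorm q β * ((Fintype.card m : ℝ) ^ (1 / r) * Xb) := by
  have hr := hqr.symm.pos
  calc ∑ j, |β j| * lpNorm r (fun i => X i j)
      = ∑ j, |β j| * |lpNorm r (fun i => X i j)| := by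
        simp only [abs_of_nonneg (lpNorm_nonneg _ _)]
    _ ≤ lpNorm q β * lpNorm r (fun j => lpNorm r (fun i => X i j)) :=
        sum_abs_mul_abs_le_lpNorm_mul_lpNorm hqr _ _
    _ ≤ lpNorm q β * ((Fintype.card m : ℝ) ^ (1 / r) * Xb) := by
        gcongr
        · exact lpNorm_nonneg _ _
        · rw [← Real.rpow_le_rpow_iff (lpNorm_nonneg _ _) (by positivity) hr, lpNorm_rpow hr.ne',
            Real.mul_rpow (by positivity) hXb, ← Real.rpow_mul (by positivity),
            one_div_mul_cancel hr.ne', Real.rpow_one]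
          simpa only [abs_of_nonneg (lpNorm_nonneg _ _)] using sum_lpNorm_col_rpow_le hr hX

lemma sum_abs_div_le_one_of_lpNorm_le [Nonempty m] {q : ℝ} (hqr : q.HolderConjugate r)
    {X : Matrix m n ℝ} {Xb Bb : ℝ} (hXb : 0 < Xb) (hBb : 0 < Bb) (hX : ∀ i, lpNorm r (X i) ≤ Xb)
    {β : n → ℝ} (hβ : lpNorm q β ≤ Bb) :
    ∑ j, |β j / ((Fintype.card m : ℝ) ^ (1 / r) * Xb * Bb / lpNorm r (fun i => X i j))| ≤ 1 := by
  set N := (Fintype.card m : ℝ) ^ (1 / r) * Xb * Bb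
  have hm : (0 : ℝ) < Fintype.card m := Nat.cast_pos.2 Fintype.card_pos
  have hN : 0 < N := by positivity
  calc ∑ j, |β j / (N / lpNorm r (fun i => X i j))|
      = (∑ j, |β j| * lpNorm r (fun i => X i j)) / N := by
        simp only [div_div_eq_mul_div, abs_div, abs_mul, abs_of_nonneg (lpNorm_nonneg _ _),
          abs_of_pos hN, sum_div]
    _ ≤ 1 := by
        rw [div_le_one hN]
        calc ∑ j, |β j| * lpNorm r (fun i => X i j)
            ≤ lpNorm q β * ((Fintype.card m : ℝ) ^ (1 / r) * Xb) :=
              sum_abs_mul_lpNorm_col_le hqr hXb.le hX β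
          _ ≤ Bb * ((Fintype.card m : ℝ) ^ (1 / r) * Xb) := by gcongr
          _ = N := by ring

end Matrix

lemma mulVec_eq_mulVec_div_of_col_eq_mul {m n : Type*} [Fintype n] {A B : Matrix m n ℝ}
    {s : n → ℝ} (hs : ∀ j, s j ≠ 0) (hB : ∀ i j, B i j = s j * A i j) (β : n → ℝ) :
    A.mulVec β = B.mulVec fun j => β j / s j := by
  ext i
  simp only [Matrix.mulVec, dotProduct, hB]
  exact sum_congr rfl fun j _ => by field_simp [hs j]

section Maurey

variable {E : Type*} [NormedAddCommGroup E] [InnerProductSpace ℝ E] {ι : Type*} [Fintype ι]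

lemma exists_le_of_sum_mul_le {w x : ι → ℝ} {b : ℝ}
    (hw0 : ∀ i, 0 ≤ w i) (hw1 : ∑ i, w i = 1) (h : ∑ i, w i * x i ≤ b) : ∃ i, x i ≤ b := by
  have hne : (univ : Finset ι).Nonempty := nonempty_of_sum_ne_zero (hw1 ▸ one_ne_zero)
  obtain ⟨i, -, hi⟩ := exists_min_image univ x hne
  refine ⟨i, le_trans ?_ h⟩
  calc x i = ∑ j, w j * x i := by rw [← sum_mul, hw1, one_mul]
    _ ≤ ∑ j, w j * x j := sum_le_sum fun j _ => by gcongr; exacts [hw0 j, hi j (mem_univ j)]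

/-- Averaging over `i` with weights `w`, the cross terms cancel: the mean of
`‖x + (a i - f)‖²` is `‖x‖² - ‖f‖² + ∑ w i ‖a i‖²`. -/
lemma exists_norm_add_sub_sq_le {w : ι → ℝ} {a : ι → E} {M : ℝ} (hw0 : ∀ i, 0 ≤ w i)
    (hw1 : ∑ i, w i = 1) (ha : ∀ i, ‖a i‖ ^ 2 ≤ M) (x : E) :
    ∃ i, ‖x + (a i - ∑ j, w j • a j)‖ ^ 2 ≤ ‖x‖ ^ 2 + M := by
  set f := ∑ j, w j • a j
  apply exists_le_of_sum_mul_le hw0 hw1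
  have hinner : ∑ i, w i * inner ℝ (x - f) (a i) = inner ℝ (x - f) f := by
    simp only [f, inner_sum, real_inner_smul_right]
  have hnorm : ‖x‖ ^ 2 = ‖x - f‖ ^ 2 + 2 * inner ℝ (x - f) f + ‖f‖ ^ 2 := by
    rw [← norm_add_sq_real, sub_add_cancel]
  have hM : ∑ i, w i * ‖a i‖ ^ 2 ≤ M := by
    calc ∑ i, w i * ‖a i‖ ^ 2 ≤ ∑ i, w i * M :=
          sum_le_sum fun i _ => mul_le_mul_of_nonneg_left (ha i) (hw0 i)
      _ = M := by rw [← sum_mul, hw1, one_mul]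
  calc ∑ i, w i * ‖x + (a i - f)‖ ^ 2
      = ∑ i, w i * (‖x - f‖ ^ 2 + 2 * inner ℝ (x - f) (a i) + ‖a i‖ ^ 2) := by
        refine sum_congr rfl fun i _ => ?_
        rw [← norm_add_sq_real, sub_add_eq_add_sub, add_sub_assoc]
    _ = ‖x - f‖ ^ 2 + 2 * inner ℝ (x - f) f + ∑ i, w i * ‖a i‖ ^ 2 := by
        simp only [mul_add, sum_add_distrib, ← sum_mul, hw1, ← hinner, mul_sum]
        ring_nf
    _ ≤ ‖x‖ ^ 2 + M := by nlinarith [sq_nonneg ‖f‖]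

/-- Maurey's empirical method, derandomised: the atoms are chosen greedily, one at a time. -/
theorem exists_nat_sum_eq_norm_nsmul_sub_sq_le [DecidableEq ι] {w : ι → ℝ} {a : ι → E} {M : ℝ}
    (hw0 : ∀ i, 0 ≤ w i) (hw1 : ∑ i, w i = 1) (ha : ∀ i, ‖a i‖ ^ 2 ≤ M) (t : ℕ) :
    ∃ m : ι → ℕ, ∑ i, m i = t ∧ ‖∑ i, m i • a i - t • ∑ i, w i • a i‖ ^ 2 ≤ t * M := by
  induction t with
  | zero => exact ⟨0, by simp, by simp⟩
  | succ t ih =>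
    obtain ⟨m, hm, herr⟩ := ih
    obtain ⟨i, hi⟩ := exists_norm_add_sub_sq_le hw0 hw1 ha (∑ j, m j • a j - t • ∑ j, w j • a j)
    refine ⟨m + Pi.single i 1, by simp [sum_add_distrib, hm], ?_⟩
    have hsum : ∑ j, (m + Pi.single i 1 : ι → ℕ) j • a j = ∑ j, m j • a j + a i := by
      simp [add_smul, sum_add_distrib, Pi.single_apply]
    rw [hsum, succ_nsmul, add_sub_add_comm, Nat.cast_succ, add_one_mul]
    linarith

/-- A zero atom absorbs the slack weight `1 - ∑ |b i|`, and the signs of `b` are moved into the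
atoms. -/
theorem exists_int_sum_abs_le_norm_sum_sub_sq_le {b : ι → ℝ} {a : ι → E} {M : ℝ}
    (hb : ∑ i, |b i| ≤ 1) (ha : ∀ i, ‖a i‖ ^ 2 ≤ M) (hM : 0 ≤ M) {K : ℕ} (hK : 0 < K) :
    ∃ k : ι → ℤ, ∑ i, |k i| ≤ K ∧ ‖∑ i, (b i - k i / K) • a i‖ ^ 2 ≤ M / K := by
  classical
  let w : Option ι → ℝ := fun o => o.elim (1 - ∑ i, |b i|) fun i => |b i|
  let A : Option ι → E := fun o => o.elim 0 fun i => (SignType.sign (b i) : ℝ) • a i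
  have hw0 : ∀ o, 0 ≤ w o := by
    rintro (_ | i)
    · exact sub_nonneg.2 hb
    · exact abs_nonneg _
  have hw1 : ∑ o, w o = 1 := by simp [w, Fintype.sum_option]
  have hA : ∀ o, ‖A o‖ ^ 2 ≤ M := by
    rintro (_ | i)
    · simpa [A] using hM
    · change ‖(SignType.sign (b i) : ℝ) • a i‖ ^ 2 ≤ M
      cases SignType.sign (b i) <;> simp [ha i, hM]
  obtain ⟨m, hm, herr⟩ := exists_nat_sum_eq_norm_nsmul_sub_sq_le hw0 hw1 hA K
  refine ⟨fun i => SignType.sign (b i) * m (some i), ?_, ?_⟩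
  · calc ∑ i, |(SignType.sign (b i) * m (some i) : ℤ)| ≤ ∑ i, (m (some i) : ℤ) :=
          sum_le_sum fun i _ => by cases SignType.sign (b i) <;> simp
      _ ≤ K := by rw [← hm, Fintype.sum_option]; push_cast; omega
  · have hf : ∑ o, w o • A o = ∑ i, b i • a i := by
      simp [w, A, Fintype.sum_option, smul_smul, abs_mul_sign]
    have hm : ∑ o, m o • A o = ∑ i, ((SignType.sign (b i) * m (some i) : ℤ) : ℝ) • a i := by
      simp [A, Fintype.sum_option, smul_smul, ← Nat.cast_smul_eq_nsmul ℝ, mul_comm]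
    have hK' : (0 : ℝ) < K := Nat.cast_pos.2 hK
    have hdiff : ∑ i, (b i - (SignType.sign (b i) * m (some i) : ℤ) / K) • a i
        = -(K : ℝ)⁻¹ • (∑ o, m o • A o - K • ∑ o, w o • A o) := by
      rw [hf, hm, ← Nat.cast_smul_eq_nsmul ℝ K, smul_sub, smul_sum, smul_sum, smul_sum,
        ← sum_sub_distrib]
      refine sum_congr rfl fun i _ => ?_
      rw [smul_smul, smul_smul, smul_smul, ← sub_smul]
      congr 1
      field_simp
      ring
    rw [hdiff, norm_smul, mul_pow, norm_neg, norm_inv, Real.norm_natCast]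
    calc ((K : ℝ)⁻¹) ^ 2 * ‖∑ o, m o • A o - K • ∑ o, w o • A o‖ ^ 2
        ≤ ((K : ℝ)⁻¹) ^ 2 * (K * M) := by gcongr
      _ = M / K := by field_simp

theorem exists_int_sum_abs_le_sum_sq_mulVec_sub_le {m : Type*} [Fintype m] {A : Matrix m ι ℝ}
    {M : ℝ} (hA : ∀ j, ∑ i, A i j ^ 2 ≤ M) (hM : 0 ≤ M) {b : ι → ℝ} (hb : ∑ j, |b j| ≤ 1)
    {K : ℕ} (hK : 0 < K) :
    ∃ k : ι → ℤ, ∑ j, |k j| ≤ K ∧ ∑ i, A.mulVec (fun j => b j - k j / K) i ^ 2 ≤ M / K := by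
  let a : ι → EuclideanSpace ℝ m := fun j => WithLp.toLp 2 fun i => A i j
  have ha : ∀ j, ‖a j‖ ^ 2 ≤ M := fun j => by
    simpa [a, EuclideanSpace.norm_sq_eq] using hA j
  obtain ⟨k, hk, hka⟩ := exists_int_sum_abs_le_norm_sum_sub_sq_le hb ha hM hK
  refine ⟨k, hk, le_of_eq_of_le ?_ hka⟩
  simp [a, EuclideanSpace.norm_sq_eq, Matrix.mulVec, dotProduct, mul_comm]

end Maurey

section Constraints

variable {ι m : Type*} [Fintype ι] [Fintype m]

lemma sum_mul_le_one_of_sum_sq_sub_le {c b κ : ι → ℝ} {δ d : ℝ} (hd : 0 ≤ d)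
    (hdδ : d * ∑ j, |c j| ≤ δ) (hb : ∑ j, c j * b j + δ ≤ 1)
    (hκ : ∑ j, (b j - κ j) ^ 2 ≤ d ^ 2) : ∑ j, c j * κ j ≤ 1 := by
  have hcoord : ∀ j, |b j - κ j| ≤ d := fun j =>
    abs_le_of_sq_le_sq ((single_le_sum (f := fun j => (b j - κ j) ^ 2)
      (fun j _ => sq_nonneg _) (mem_univ j)).trans hκ) hd
  have hdev : -δ ≤ ∑ j, c j * (b j - κ j) := by
    refine (abs_le.1 ?_).1
    calc |∑ j, c j * (b j - κ j)| ≤ ∑ j, |c j| * |b j - κ j| := by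
          simpa only [abs_mul] using abs_sum_le_sum_abs (fun j => c j * (b j - κ j)) univ
      _ ≤ ∑ j, |c j| * d := sum_le_sum fun j _ => by gcongr; exact hcoord j
      _ ≤ δ := by rw [← sum_mul, mul_comm]; exact hdδ
  simp only [mul_sub, sum_sub_distrib] at hdev
  linarith

lemma div_le_of_ceil_div_le {a b : ℝ} {K : ℕ} (hb : 0 < b) (hK : 0 < K) (h : ⌈a / b⌉₊ ≤ K) :
    a / K ≤ b := by
  rw [div_le_iff₀ (Nat.cast_pos.2 hK), ← div_le_iff₀' hb]
  exact (Nat.le_ceil _).trans (Nat.cast_le.2 h)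

lemma sqrt_le_sqrt_mul_of_le_mul_div {S N a ε : ℝ} {K : ℕ} (hS : S ≤ N * a / K) (hN : 0 ≤ N)
    (hε : 0 < ε) (hK : 0 < K) (h : ⌈a / ε ^ 2⌉₊ ≤ K) : √S ≤ √N * ε := by
  have haK : a / K ≤ ε ^ 2 := div_le_of_ceil_div_le (by positivity) hK h
  calc √S ≤ √(N * ε ^ 2) := Real.sqrt_le_sqrt (hS.trans (by rw [mul_div_assoc]; gcongr))
    _ = √N * ε := by rw [Real.sqrt_mul hN, Real.sqrt_sq hε.le]

/-- Lemma 3 of the paper: once `K ≥ M / (λ d²)`, the quadratic lower bound `λ` turns the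
approximation error into a coordinatewise error of at most `d`, which the slack `δ` absorbs. -/
lemma sum_mul_intCast_le_of_sum_sq_mulVec_sub_le {A : Matrix m ι ℝ} {lam M d δ : ℝ}
    {c b : ι → ℝ} {k : ι → ℤ} {K : ℕ} (hlam : 0 < lam)
    (hquad : ∀ v, lam * ∑ j, v j ^ 2 ≤ ∑ i, A.mulVec v i ^ 2)
    (herr : ∑ i, A.mulVec (fun j => b j - k j / K) i ^ 2 ≤ M / K) (hd : 0 < d)
    (hK : ⌈M / (lam * d ^ 2)⌉₊ ≤ K) (hKpos : 0 < K) (hc : 0 < ∑ j, |c j|)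
    (hdδ : d ≤ δ / ∑ j, |c j|) (hb : ∑ j, c j * b j + δ ≤ 1) : ∑ j, c j * k j ≤ K := by
  have hκ : ∑ j, (b j - k j / K) ^ 2 ≤ d ^ 2 := by
    refine le_of_mul_le_mul_left ?_ hlam
    calc lam * ∑ j, (b j - k j / K) ^ 2 ≤ M / K := (hquad _).trans herr
      _ ≤ lam * d ^ 2 := div_le_of_ceil_div_le (by positivity) hKpos hK
  calc ∑ j, c j * k j = K * ∑ j, c j * (k j / K) := by
        rw [mul_sum]; exact sum_congr rfl fun j _ => by field_simp
    _ ≤ K := mul_le_of_le_one_right (Nat.cast_nonneg K)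
        (sum_mul_le_one_of_sum_sq_sub_le hd.le ((le_div_iff₀ hc).1 hdδ) hb hκ)

end Constraints

theorem covering_construction_general
    (n p V : ℕ) (hn : 1 ≤ n)
    (r : ℝ) (hr : 2 ≤ r) (q : ℝ) (hq : q = r / (r - 1))
    (Xb Bb : ℝ) (hXb : 0 < Xb) (hBb : 0 < Bb)
    (X : Matrix (Fin n) (Fin p) ℝ)
    (hrow : ∀ i, lpNorm r (X i) ≤ Xb)
    (hcolne : ∀ j, (fun i => X i j) ≠ 0)
    (ht : Fin p → Fin n → ℝ)
    (hht : ∀ j, ht j = fun i =>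
      ((n : ℝ) ^ (1 / r) * Xb * Bb / lpNorm r (fun i' => X i' j)) * X i j)
    (c : Fin V → Fin p → ℝ) (δ : Fin V → ℝ) (hδ : ∀ ν, 0 < δ ν)
    (ct : Fin V → Fin p → ℝ)
    (hct : ∀ ν j, ct ν j =
      c ν j * ((n : ℝ) ^ (1 / r) * Xb * Bb) / lpNorm r (fun i => X i j))
    (hctpos : ∀ ν, 0 < ∑ j, |ct ν j|)
    (Xt : Matrix (Fin n) (Fin p) ℝ) (hXt : ∀ i j, Xt i j = ht j i)
    (lam : ℝ) (hlam : 0 < lam)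
    (hquad : ∀ v : Fin p → ℝ, lam * ∑ j, (v j) ^ 2 ≤ ∑ i, (Xt.mulVec v i) ^ 2)
    (ε : ℝ) (hε0 : 0 < ε)
    (K : ℕ)
    (hK : K = max ⌈Xb ^ 2 * Bb ^ 2 / ε ^ 2⌉₊
        ⌈(n : ℝ) * Xb ^ 2 * Bb ^ 2 /
          (lam * (⨅ ν : Fin V, δ ν / ∑ j, |ct ν j|) ^ 2)⌉₊) :
    ∀ β : Fin p → ℝ, lpNorm q β ≤ Bb → (∀ ν, ∑ j, c ν j * β j + δ ν ≤ 1) →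
      ∃ k : Fin p → ℤ, (∑ j, |k j|) ≤ (K : ℤ) ∧
        (∀ ν, ∑ j, ct ν j * (k j : ℝ) ≤ (K : ℝ)) ∧
        Real.sqrt (∑ i, (X.mulVec β i - ∑ j, ((k j : ℝ) / K) * ht j i) ^ 2) ≤
          Real.sqrt n * ε := by
  intro β hβq hβc
  have : Nonempty (Fin n) := ⟨⟨0, hn⟩⟩
  have hqr : q.HolderConjugate r := hq ▸ (Real.HolderConjugate.conjExponent (by linarith)).symm
  set s : Fin p → ℝ := fun j => (n : ℝ) ^ (1 / r) * Xb * Bb / lpNorm r fun i => X i j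
  have hs : ∀ j, s j ≠ 0 := fun j => (div_pos (by positivity) (lpNorm_pos (hcolne j))).ne'
  set b : Fin p → ℝ := fun j => β j / s j
  have hb : ∑ j, |b j| ≤ 1 := by
    simpa only [Fintype.card_fin] using sum_abs_div_le_one_of_lpNorm_le hqr hXb hBb hrow hβq
  have hcb : ∀ ν, ∑ j, ct ν j * b j = ∑ j, c ν j * β j := fun ν =>
    sum_congr rfl fun j _ => by
      rw [hct, mul_div_assoc]
      change c ν j * s j * (β j / s j) = c ν j * β j
      field_simp [hs j]
  have hcol : ∀ j, ∑ i, Xt i j ^ 2 ≤ n * Xb ^ 2 * Bb ^ 2 := fun j => by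
    simpa only [hXt, hht, Fintype.card_fin, mul_assoc, mul_pow] using
      sum_sq_mul_div_lpNorm_le hr (Xb * Bb) fun i => X i j
  have hKpos : 0 < K := hK ▸ lt_max_of_lt_left (Nat.ceil_pos.2 (by positivity))
  obtain ⟨k, hk, herr⟩ :=
    exists_int_sum_abs_le_sum_sq_mulVec_sub_le hcol (by positivity) hb hKpos
  refine ⟨k, hk, fun ν => ?_, ?_⟩
  · have : Nonempty (Fin V) := ⟨ν⟩
    obtain ⟨ν₀, hν₀⟩ := exists_eq_ciInf_of_finite (f := fun ν => δ ν / ∑ j, |ct ν j|)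
    refine sum_mul_intCast_le_of_sum_sq_mulVec_sub_le hlam hquad herr
      (hν₀ ▸ div_pos (hδ ν₀) (hctpos ν₀)) (hK ▸ le_max_right _ _) hKpos (hctpos ν)
      (ciInf_le (Set.finite_range _).bddBelow ν) (hcb ν ▸ hβc ν)
  · have hXβ : X.mulVec β = Xt.mulVec b :=
      mulVec_eq_mulVec_div_of_col_eq_mul hs (fun i j => by rw [hXt, hht]) β
    have hres : ∀ i, X.mulVec β i - ∑ j, (k j / K : ℝ) * ht j i =
        Xt.mulVec (fun j => b j - k j / K) i := fun i => by
      rw [hXβ]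
      simp only [Matrix.mulVec, dotProduct, hXt, mul_sub, sum_sub_distrib, mul_comm]
    simp only [hres]
    exact sqrt_le_sqrt_mul_of_le_mul_div (herr.trans_eq (by ring)) n.cast_nonneg hε0 hKpos
      (hK ▸ le_max_left _ _)

/-- The core covering construction in the proof of the paper's Theorem 3: in the covering
setup (rows of the data matrix in the `ℓ_r` ball of radius `X_b`, nonzero columns `h j`,
scaled columns `h̃ j`, scaled constraint coefficients `c̃ ν j`, `λ > 0` a quadratic-form
lower bound for `X̃ᵀX̃`), for `0 < ε < X_b B_b` and
`K = max{⌈X_b²B_b²/ε²⌉, ⌈n X_b²B_b²/(λ [min_ν δ ν/∑_j |c̃ ν j|]²)⌉}`, every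
`β` with `‖β‖_q ≤ B_b` and `∑ j c ν j β j + δ ν ≤ 1` for all `ν` admits integers
`k 1, ..., k p` with `∑ j |k j| ≤ K` and `∑ j c̃ ν j k j ≤ K` for all `ν`, such that
`‖Xβ - ∑ j (k j / K) h̃ j‖₂ ≤ √n ε`. -/
theorem covering_construction
    (n p V : ℕ) (hn : 1 ≤ n) (hp : 1 ≤ p) (hV : 0 < V)
    (r : ℝ) (hr : 2 ≤ r) (q : ℝ) (hq : q = r / (r - 1))
    (Xb Bb : ℝ) (hXb : 0 < Xb) (hBb : 0 < Bb)
    (X : Matrix (Fin n) (Fin p) ℝ)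
    (hrow : ∀ i, lpNorm r (X i) ≤ Xb)
    (hcolne : ∀ j, (fun i => X i j) ≠ 0)
    (ht : Fin p → Fin n → ℝ)
    (hht : ∀ j, ht j = fun i =>
      ((n : ℝ) ^ (1 / r) * Xb * Bb / lpNorm r (fun i' => X i' j)) * X i j)
    (c : Fin V → Fin p → ℝ) (δ : Fin V → ℝ) (hδ : ∀ ν, 0 < δ ν)
    (ct : Fin V → Fin p → ℝ)
    (hct : ∀ ν j, ct ν j =
      c ν j * ((n : ℝ) ^ (1 / r) * Xb * Bb) / lpNorm r (fun i => X i j))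
    (hctpos : ∀ ν, 0 < ∑ j, |ct ν j|)
    (Xt : Matrix (Fin n) (Fin p) ℝ) (hXt : ∀ i j, Xt i j = ht j i)
    (lam : ℝ) (hlam : 0 < lam)
    (hquad : ∀ v : Fin p → ℝ, lam * ∑ j, (v j) ^ 2 ≤ ∑ i, (Xt.mulVec v i) ^ 2)
    (ε : ℝ) (hε0 : 0 < ε) (hε : ε < Xb * Bb)
    (K : ℕ)
    (hK : K = max ⌈Xb ^ 2 * Bb ^ 2 / ε ^ 2⌉₊
        ⌈(n : ℝ) * Xb ^ 2 * Bb ^ 2 /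
          (lam * (⨅ ν : Fin V, δ ν / ∑ j, |ct ν j|) ^ 2)⌉₊) :
    ∀ β : Fin p → ℝ, lpNorm q β ≤ Bb → (∀ ν, ∑ j, c ν j * β j + δ ν ≤ 1) →
      ∃ k : Fin p → ℤ, (∑ j, |k j|) ≤ (K : ℤ) ∧
        (∀ ν, ∑ j, ct ν j * (k j : ℝ) ≤ (K : ℝ)) ∧
        Real.sqrt (∑ i, (X.mulVec β i - ∑ j, ((k j : ℝ) / K) * ht j i) ^ 2) ≤
          Real.sqrt n * ε :=
  covering_construction_general n p V hn r hr q hq Xb Bb hXb hBb X hrow hcolne ht hht c δ hδ ct hct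
    hctpos Xt hXt lam hlam hquad ε hε0 K hK
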